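/- Let P be a 3×3 real invertible matrix with largest and smallest singular values δ₁ ≥ δ₃ > 0. For thrice-differentiable curves r, v : [0,∞) → ℝ³ with v(t) = P r(t) and r'(t) × r''(t) ≠ 0, the torsions τ_r(t) = (r'(t) × r''(t)) · r'''(t) / ‖r'(t) × r''(t)‖² and τ_v (defined analogously) satisfy (|det P|/δ₁⁴)|τ_r(t)| ≤ |τ_v(t)| ≤ (|det P|/δ₃⁴)|τ_r(t)|. -/

import Mathlib

open Matrix

section helpers2

lemma cross_dot_P (P : Matrix (Fin 3) (Fin 3) ℝ) (a b w : Fin 3 → ℝ) :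
    crossProduct (P *ᵥ a) (P *ᵥ b) ⬝ᵥ (P *ᵥ w) = P.det * (crossProduct a b ⬝ᵥ w) := by
  simp [crossProduct, mulVec, dotProduct, det_fin_three, Fin.sum_univ_three]
  ring

lemma deriv_push (P : Matrix (Fin 3) (Fin 3) ℝ) (f g : ℝ → (Fin 3 → ℝ))
    (f' g' : Fin 3 → ℝ) (t : ℝ) (ht : 0 ≤ t)
    (hfg : ∀ s, 0 ≤ s → g s = P *ᵥ f s)
    (hf : HasDerivAt f f' t) (hg : HasDerivAt g g' t) : g' = P *ᵥ f' := by
  have h1 : HasDerivAt (fun s => P *ᵥ f s) (P *ᵥ f') t := by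
    have := ((LinearMap.toContinuousLinearMap (Matrix.mulVecLin P)).hasFDerivAt
      (x := f t)).comp_hasDerivAt t hf
    exact this
  have h2 : HasDerivWithinAt g (P *ᵥ f') (Set.Ici 0) t :=
    (h1.hasDerivWithinAt).congr (fun s hs => hfg s hs) (hfg t ht)
  have h3 := h2.derivWithin (uniqueDiffOn_Ici 0 t ht)
  have h4 := hg.hasDerivWithinAt.derivWithin (uniqueDiffOn_Ici 0 t ht)
  rw [← h3, ← h4]

end helpers2


noncomputable def e3norm (a : Fin 3 → ℝ) : ℝ := Real.sqrt (∑ i, (a i) ^ 2)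

lemma e3norm_nonneg (a : Fin 3 → ℝ) : 0 ≤ e3norm a := Real.sqrt_nonneg _

lemma e3norm_sq (a : Fin 3 → ℝ) : e3norm a ^ 2 = ∑ i, (a i) ^ 2 := by
  rw [e3norm, Real.sq_sqrt]; positivity

lemma e3norm_pos (a : Fin 3 → ℝ) (ha : a ≠ 0) : 0 < e3norm a := by
  obtain ⟨i, hi⟩ : ∃ i, a i ≠ 0 := by
    by_contra h; push_neg at h; exact ha (funext h)
  apply Real.sqrt_pos.2
  have h1 : (a i)^2 ≤ ∑ j, (a j)^2 :=
    Finset.single_le_sum (fun j _ => sq_nonneg (a j)) (Finset.mem_univ i)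
  have h2 : 0 < (a i)^2 := (sq_nonneg _).lt_of_ne (Ne.symm (pow_ne_zero 2 hi))
  linarith

lemma lagrange (u v : Fin 3 → ℝ) :
    ∑ i, (crossProduct u v) i ^ 2 = (∑ i, u i ^ 2) * (∑ i, v i ^ 2) - (u ⬝ᵥ v)^2 := by
  simp [crossProduct, dotProduct, Fin.sum_univ_three]; ring

lemma cross_le (u v : Fin 3 → ℝ) : e3norm (crossProduct u v) ≤ e3norm u * e3norm v := by
  rw [e3norm, e3norm, e3norm, ← Real.sqrt_mul (by positivity)]
  apply Real.sqrt_le_sqrt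
  rw [lagrange]; nlinarith [sq_nonneg (u ⬝ᵥ v)]

lemma triple (c a : Fin 3 → ℝ) :
    crossProduct a (crossProduct c a) = (∑ i, a i ^ 2) • c - (a ⬝ᵥ c) • a := by
  funext i; fin_cases i <;>
  · simp [crossProduct, dotProduct, Fin.sum_univ_three]
    ring

lemma Pt_cross (P : Matrix (Fin 3) (Fin 3) ℝ) (a b : Fin 3 → ℝ) :
    Pᵀ *ᵥ (crossProduct (P *ᵥ a) (P *ᵥ b)) = P.det • (crossProduct a b) := by
  funext i
  fin_cases i <;>
  · simp [crossProduct, mulVec, dotProduct, det_fin_three, Fin.sum_univ_three]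
    ring

lemma cross_congr (P : Matrix (Fin 3) (Fin 3) ℝ) (hP : IsUnit P.det) (a b a' b' : Fin 3 → ℝ)
    (h : crossProduct a b = crossProduct a' b') :
    crossProduct (P *ᵥ a) (P *ᵥ b) = crossProduct (P *ᵥ a') (P *ᵥ b') := by
  have inj : Function.Injective (Pᵀ.mulVec) :=
    mulVec_injective_iff_isUnit.2 ((Matrix.isUnit_iff_isUnit_det _).2 (by simpa using hP))
  apply inj
  rw [Pt_cross, Pt_cross, h]

lemma key (P : Matrix (Fin 3) (Fin 3) ℝ) (hP : IsUnit P.det) (δ : ℝ) (hδ : 0 < δ)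
    (hup : ∀ x, e3norm (P *ᵥ x) ≤ δ * e3norm x) (a b : Fin 3 → ℝ) :
    e3norm (crossProduct (P *ᵥ a) (P *ᵥ b)) ≤ δ ^ 2 * e3norm (crossProduct a b) := by
  set c := crossProduct a b with hc
  by_cases hc0 : c = 0
  · have h0 : crossProduct (P *ᵥ a) (P *ᵥ b) = 0 := by
      have := cross_congr P hP a b 0 0 (by simp [← hc, hc0])
      simpa [Matrix.mulVec_zero] using this
    simp [h0, hc0, e3norm]
  · set a₀ : Fin 3 → ℝ := if c 0 = 0 ∧ c 1 = 0 then ![1,0,0] else ![-(c 1), c 0, 0] with ha₀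
    have hdot : a₀ ⬝ᵥ c = 0 := by
      rw [ha₀]; split_ifs with h
      · simp [dotProduct, Fin.sum_univ_three, h.1]
      · simp [dotProduct, Fin.sum_univ_three]; ring
    set s : ℝ := ∑ i, a₀ i ^ 2 with hs
    have hspos : 0 < s := by
      rw [hs, ha₀]; split_ifs with h
      · norm_num [Fin.sum_univ_three]; positivity
      · rw [not_and_or] at h
        simp only [Fin.sum_univ_three]
        rcases h with h | h <;>
          [ (have h2 : 0 < (c 0)^2 := (sq_nonneg _).lt_of_ne (Ne.symm (pow_ne_zero 2 h)));
            (have h2 : 0 < (c 1)^2 := (sq_nonneg _).lt_of_ne (Ne.symm (pow_ne_zero 2 h)))] <;>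
        · simp only [Matrix.cons_val_zero, Matrix.cons_val_one, Matrix.head_cons]
          nlinarith [sq_nonneg (c 0), sq_nonneg (c 1)]
    set b₀ := crossProduct c a₀ with hb₀
    have htrip : crossProduct a₀ b₀ = s • c := by
      show crossProduct a₀ (crossProduct c a₀) = s • c
      rw [triple c a₀, hdot]; simp [hs]
    set a₁ : Fin 3 → ℝ := s⁻¹ • a₀ with ha₁
    have hcross1 : crossProduct a₁ b₀ = c := by
      rw [ha₁, LinearMap.map_smul, LinearMap.smul_apply, htrip, smul_smul,
        inv_mul_cancel₀ hspos.ne', one_smul]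
    have heq : crossProduct (P *ᵥ a) (P *ᵥ b) = crossProduct (P *ᵥ a₁) (P *ᵥ b₀) :=
      cross_congr P hP a b a₁ b₀ (by rw [← hc, hcross1])
    rw [heq]
    calc e3norm (crossProduct (P *ᵥ a₁) (P *ᵥ b₀))
        ≤ e3norm (P *ᵥ a₁) * e3norm (P *ᵥ b₀) := cross_le _ _
      _ ≤ (δ * e3norm a₁) * (δ * e3norm b₀) :=
          mul_le_mul (hup a₁) (hup b₀) (e3norm_nonneg _)
            (mul_nonneg hδ.le (e3norm_nonneg _))
      _ = δ ^ 2 * (e3norm a₁ * e3norm b₀) := by ring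
      _ = δ ^ 2 * e3norm c := by
          congr 1
          rw [e3norm, e3norm, e3norm, ← Real.sqrt_mul (by positivity)]
          congr 1
          have h1 : ∑ i, (a₁ i)^2 = s⁻¹ := by
            have he : ∑ i, (a₁ i)^2 = s⁻¹^2 * s := by
              simp [ha₁, mul_pow, ← Finset.mul_sum, ← hs]
            rw [he, sq, mul_assoc, inv_mul_cancel₀ hspos.ne', mul_one]
          have h2 : ∑ i, (b₀ i)^2 = s * ∑ i, (c i)^2 := by
            show ∑ i, ((crossProduct c a₀) i)^2 = _
            rw [lagrange, dotProduct_comm, hdot]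
            simp only [← hs]; ring
          rw [h1, h2, ← mul_assoc, inv_mul_cancel₀ hspos.ne', one_mul]

/-- Torsion of a space curve from its first three derivatives. -/
noncomputable def torsion3 (r' r'' r''' : Fin 3 → ℝ) : ℝ :=
  (crossProduct r' r'' ⬝ᵥ r''') / (e3norm (crossProduct r' r'')) ^ 2


theorem torsion_bounds_of_equivalence
    (P : Matrix (Fin 3) (Fin 3) ℝ) (hP : IsUnit P.det)
    (δ₁ δ₃ : ℝ) (hδ : δ₁ ≥ δ₃) (h3 : 0 < δ₃)
    -- δ₁ and δ₃ are the largest and smallest singular values of P: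
    (hup : ∀ x : Fin 3 → ℝ, e3norm (P *ᵥ x) ≤ δ₁ * e3norm x)
    (hlo : ∀ x : Fin 3 → ℝ, δ₃ * e3norm x ≤ e3norm (P *ᵥ x))
    (r v r' r'' r''' v' v'' v''' : ℝ → (Fin 3 → ℝ))
    (hv : ∀ t, 0 ≤ t → v t = P *ᵥ r t)
    (hr1 : ∀ t, 0 ≤ t → HasDerivAt r (r' t) t)
    (hr2 : ∀ t, 0 ≤ t → HasDerivAt r' (r'' t) t)
    (hr3 : ∀ t, 0 ≤ t → HasDerivAt r'' (r''' t) t)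
    (hv1 : ∀ t, 0 ≤ t → HasDerivAt v (v' t) t)
    (hv2 : ∀ t, 0 ≤ t → HasDerivAt v' (v'' t) t)
    (hv3 : ∀ t, 0 ≤ t → HasDerivAt v'' (v''' t) t)
    (hne : ∀ t, 0 ≤ t → crossProduct (r' t) (r'' t) ≠ 0)
    (t : ℝ) (ht : 0 ≤ t) :
    |P.det| / δ₁ ^ 4 * |torsion3 (r' t) (r'' t) (r''' t)| ≤
        |torsion3 (v' t) (v'' t) (v''' t)| ∧
      |torsion3 (v' t) (v'' t) (v''' t)| ≤
        |P.det| / δ₃ ^ 4 * |torsion3 (r' t) (r'' t) (r''' t)| := by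
  have hδ1 : 0 < δ₁ := lt_of_lt_of_le h3 hδ
  have e1 : ∀ s, 0 ≤ s → v' s = P *ᵥ r' s :=
    fun s hs => deriv_push P r v _ _ s hs hv (hr1 s hs) (hv1 s hs)
  have e2 : ∀ s, 0 ≤ s → v'' s = P *ᵥ r'' s :=
    fun s hs => deriv_push P r' v' _ _ s hs e1 (hr2 s hs) (hv2 s hs)
  have e3 : v''' t = P *ᵥ r''' t :=
    deriv_push P r'' v'' _ _ t ht e2 (hr3 t ht) (hv3 t ht)
  set A := r' t with hA
  set B := r'' t with hB
  set C := r''' t with hC0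
  set c := crossProduct A B with hcc
  set N : ℝ := c ⬝ᵥ C with hN
  set Cn := e3norm c with hCn
  set y := crossProduct (P *ᵥ A) (P *ᵥ B) with hy
  set Y := e3norm y with hY
  have hYle : Y ≤ δ₁ ^ 2 * Cn := key P hP δ₁ hδ1 hup A B
  have hup' : ∀ x, e3norm (P⁻¹ *ᵥ x) ≤ δ₃⁻¹ * e3norm x := by
    intro x
    have h := hlo (P⁻¹ *ᵥ x)
    rw [Matrix.mulVec_mulVec, Matrix.mul_nonsing_inv P hP, Matrix.one_mulVec] at h
    rw [inv_mul_eq_div, le_div_iff₀ h3, mul_comm]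
    exact h
  have hkey2 := key P⁻¹ (P.isUnit_nonsing_inv_det hP) δ₃⁻¹ (inv_pos.2 h3) hup' (P *ᵥ A) (P *ᵥ B)
  rw [Matrix.mulVec_mulVec, Matrix.nonsing_inv_mul P hP, Matrix.one_mulVec,
    Matrix.mulVec_mulVec, Matrix.nonsing_inv_mul P hP, Matrix.one_mulVec] at hkey2
  have hYge : δ₃ ^ 2 * Cn ≤ Y := by
    have h := mul_le_mul_of_nonneg_left hkey2 (sq_nonneg δ₃)
    calc δ₃ ^ 2 * Cn ≤ δ₃ ^ 2 * (δ₃⁻¹ ^ 2 * Y) := h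
      _ = Y := by field_simp
  have hCpos : 0 < Cn := e3norm_pos c (hne t ht)
  have hYpos : 0 < Y := lt_of_lt_of_le (by positivity) hYge
  have hD : 0 < |P.det| := abs_pos.2 hP.ne_zero
  have hτv : torsion3 (v' t) (v'' t) (v''' t) = (P.det * N) / Y ^ 2 := by
    rw [torsion3, e1 t ht, e2 t ht, e3, cross_dot_P, ← hy, ← hY, ← hcc, ← hN]
  have hτr : torsion3 A B C = N / Cn ^ 2 := by
    rw [torsion3, ← hcc, ← hN, ← hCn]
  have habsv : |torsion3 (v' t) (v'' t) (v''' t)| = |P.det| * |N| / Y ^ 2 := by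
    rw [hτv, abs_div, abs_mul, abs_of_nonneg (by positivity : (0:ℝ) ≤ Y ^ 2)]
  have habsr : |torsion3 A B C| = |N| / Cn ^ 2 := by
    rw [hτr, abs_div, abs_of_nonneg (by positivity : (0:ℝ) ≤ Cn ^ 2)]
  rw [habsv, habsr]
  have hsq1 : Y ^ 2 ≤ δ₁ ^ 4 * Cn ^ 2 := by nlinarith [e3norm_nonneg y, hCpos.le]
  have hsq3 : δ₃ ^ 4 * Cn ^ 2 ≤ Y ^ 2 := by
    have h := mul_le_mul hYge hYge (by positivity) hYpos.le
    nlinarith [h]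
  constructor
  · rw [div_mul_div_comm, div_le_div_iff₀ (by positivity) (by positivity)]
    nlinarith [mul_le_mul_of_nonneg_left hsq1 (show (0:ℝ) ≤ |P.det| * |N| by positivity)]
  · rw [div_mul_div_comm, div_le_div_iff₀ (by positivity) (by positivity)]
    nlinarith [mul_le_mul_of_nonneg_left hsq3 (show (0:ℝ) ≤ |P.det| * |N| by positivity)]
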